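/- arXiv:1502.03933 — 9 statements merged into one kernel-verified Lean document; each statement's English description precedes it below -/
import Mathlib

section
/- For any graph G, γ_R(G) ≤ γ_{StR}(G) ≤ (1 + ⌈Δ(G)/2⌉) · γ(G), where γ(G) is the domination number of G. -/
namespace SimpleGraph

variable {V : Type*}

/-- The degree of a vertex (cardinality of its open neighborhood). -/
noncomputable def deg (G : SimpleGraph V) (v : V) : ℕ := (G.neighborSet v).ncard

/-- Maximum degree. -/
noncomputable def maxDeg [Fintype V] (G : SimpleGraph V) : ℕ :=
  Finset.univ.sup fun v => G.deg v

/-- A strong Roman dominating function: `f : V → {0,1,...,⌈Δ/2⌉+1}` such that every vertex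
with value 0 has a neighbor `w` with `f w ≥ 2` and `f w ≥ 1 + ⌈|N(w) ∩ B₀|/2⌉`. -/
def IsStRDF [Fintype V] (G : SimpleGraph V) (f : V → ℕ) : Prop :=
  (∀ v, f v ≤ (G.maxDeg + 1) / 2 + 1) ∧
  ∀ v, f v = 0 → ∃ w, G.Adj v w ∧ 2 ≤ f w ∧
    1 + ((G.neighborSet w ∩ {u | f u = 0}).ncard + 1) / 2 ≤ f w

/-- The strong Roman domination number. -/
noncomputable def gammaStR [Fintype V] (G : SimpleGraph V) : ℕ :=
  sInf {k | ∃ f, G.IsStRDF f ∧ ∑ v, f v = k}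

/-- A Roman dominating function. -/
def IsRDF (G : SimpleGraph V) (f : V → ℕ) : Prop :=
  (∀ v, f v ≤ 2) ∧ ∀ v, f v = 0 → ∃ w, G.Adj v w ∧ f w = 2

/-- The Roman domination number. -/
noncomputable def gammaR [Fintype V] (G : SimpleGraph V) : ℕ :=
  sInf {k | ∃ f, G.IsRDF f ∧ ∑ v, f v = k}

/-- A dominating set. -/
def IsDomSet (G : SimpleGraph V) (D : Set V) : Prop :=
  ∀ v ∉ D, ∃ w ∈ D, G.Adj v w

/-- The domination number. -/
noncomputable def gammaDom [Fintype V] (G : SimpleGraph V) : ℕ :=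
  sInf {k | ∃ D : Set V, G.IsDomSet D ∧ D.ncard = k}

end SimpleGraph

/-- `γ_R(G) ≤ γ_{StR}(G) ≤ (1 + ⌈Δ(G)/2⌉) · γ(G)`. -/
theorem stmt1 {V : Type*} [Fintype V] (G : SimpleGraph V) :
    G.gammaR ≤ G.gammaStR ∧ G.gammaStR ≤ (1 + (G.maxDeg + 1) / 2) * G.gammaDom := by
  classical
  constructor
  · -- γ_R ≤ γ_StR
    have hne : {k | ∃ f, G.IsStRDF f ∧ ∑ v, f v = k}.Nonempty :=
      ⟨∑ v : V, 1, fun _ => 1, ⟨fun v => by simp, fun v h => by simp at h⟩, rfl⟩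
    obtain ⟨f, hf, hsum⟩ := Nat.sInf_mem hne
    have hg : G.IsRDF (fun v => min (f v) 2) := by
      constructor
      · intro v; exact min_le_right _ _
      · intro v hv
        replace hv : min (f v) 2 = 0 := hv
        have hfv : f v = 0 := (Nat.min_eq_zero_iff.mp hv).resolve_right (by norm_num)
        obtain ⟨w, hadj, h2, _⟩ := hf.2 v hfv
        exact ⟨w, hadj, min_eq_right h2⟩
    calc G.gammaR ≤ ∑ v, min (f v) 2 := Nat.sInf_le ⟨_, hg, rfl⟩
      _ ≤ ∑ v, f v := Finset.sum_le_sum fun v _ => min_le_left _ _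
      _ = G.gammaStR := hsum
  · -- γ_StR ≤ (1 + ⌈Δ/2⌉) γ
    have hneD : {k | ∃ D : Set V, G.IsDomSet D ∧ D.ncard = k}.Nonempty :=
      ⟨(Set.univ : Set V).ncard, Set.univ, fun v hv => absurd (Set.mem_univ v) hv, rfl⟩
    obtain ⟨D, hD, hcard⟩ := Nat.sInf_mem hneD
    have hf : G.IsStRDF (fun v => if v ∈ D then (G.maxDeg + 1) / 2 + 1 else 0) := by
      constructor
      · intro v
        by_cases h : v ∈ D
        · simp only [h, if_pos]
          exact le_refl _
        · simp only [h, if_neg, not_false_iff, ite_false]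
          omega
      · intro v hv
        simp only at hv
        have hvD : v ∉ D := by
          intro h
          rw [if_pos h] at hv
          omega
        obtain ⟨w, hwD, hadj⟩ := hD v hvD
        have h1 : (G.neighborSet w ∩
            {u | (if u ∈ D then (G.maxDeg + 1) / 2 + 1 else 0) = 0}).ncard ≤ G.deg w :=
          Set.ncard_le_ncard Set.inter_subset_left (Set.toFinite _)
        have h2 : G.deg w ≤ G.maxDeg := Finset.le_sup (Finset.mem_univ w)
        have h3 : 0 < G.deg w := (Set.ncard_pos (Set.toFinite _)).mpr ⟨v, hadj.symm⟩
        refine ⟨w, hadj, ?_, ?_⟩ <;> simp only [hwD, if_pos] <;> omega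
    have h1 : D.ncard = (Finset.univ.filter (· ∈ D)).card := by
      rw [Set.ncard_eq_toFinset_card']
      congr 1
      ext x
      simp
    have hsum : (∑ v, if v ∈ D then (G.maxDeg + 1) / 2 + 1 else 0) =
        ((G.maxDeg + 1) / 2 + 1) * D.ncard := by
      calc (∑ v, if v ∈ D then (G.maxDeg + 1) / 2 + 1 else 0)
          = ∑ v ∈ Finset.univ.filter (· ∈ D), ((G.maxDeg + 1) / 2 + 1) :=
            (Finset.sum_filter _ _).symm
        _ = (Finset.univ.filter (· ∈ D)).card * ((G.maxDeg + 1) / 2 + 1) :=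
            Finset.sum_const _
        _ = ((G.maxDeg + 1) / 2 + 1) * D.ncard := by rw [h1, Nat.mul_comm]
    have hle : G.gammaStR ≤ ∑ v, if v ∈ D then (G.maxDeg + 1) / 2 + 1 else 0 :=
      Nat.sInf_le ⟨_, hf, rfl⟩
    rw [hsum, hcard] at hle
    calc G.gammaStR ≤ ((G.maxDeg + 1) / 2 + 1) * G.gammaDom := hle
      _ = (1 + (G.maxDeg + 1) / 2) * G.gammaDom := by rw [Nat.add_comm]
end

section
/- For any graph G of order n, γ_{StR}(G) ≤ n − ⌊Δ(G)/2⌋. -/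
/-! Put weight `⌈deg v / 2⌉ + 1` on a vertex `v` of maximum degree, `0` on its neighbours and
`1` on the remaining `n - 1 - Δ` vertices. The only vertices of weight `0` are the `Δ` neighbours
of `v`, and `v` alone pays for them, so this is a strong Roman dominating function of weight
`⌈Δ/2⌉ + 1 + (n - 1 - Δ) = n - ⌊Δ/2⌋`. -/

namespace SimpleGraph

variable {V : Type*} (G : SimpleGraph V)

theorem deg_eq_degree (v : V) [Fintype (G.neighborSet v)] : G.deg v = G.degree v := by
  rw [deg, Set.ncard_eq_toFinset_card', ← card_neighborSet_eq_degree, Set.toFinset_card]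

open Classical in
noncomputable def starFun (v u : V) : ℕ :=
  if u = v then (G.deg v + 1) / 2 + 1 else if G.Adj v u then 0 else 1

theorem starFun_self (v : V) : G.starFun v v = (G.deg v + 1) / 2 + 1 := if_pos rfl

theorem starFun_eq_zero_iff {v u : V} : G.starFun v u = 0 ↔ G.Adj v u := by
  unfold starFun
  split_ifs <;> simp_all

section Fintype

variable [Fintype V]

theorem deg_le_maxDeg (v : V) : G.deg v ≤ G.maxDeg :=
  Finset.le_sup (f := G.deg) (Finset.mem_univ v)

theorem exists_deg_eq_maxDeg [Nonempty V] : ∃ v, G.deg v = G.maxDeg := by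
  obtain ⟨v, -, hv⟩ := Finset.exists_mem_eq_sup Finset.univ Finset.univ_nonempty G.deg
  exact ⟨v, hv.symm⟩

theorem isStRDF_starFun (v : V) : G.IsStRDF (G.starFun v) := by
  refine ⟨fun u => ?_, fun u hu => ?_⟩
  · have := G.deg_le_maxDeg v
    unfold starFun
    split_ifs <;> omega
  · have hvu : G.Adj v u := G.starFun_eq_zero_iff.mp hu
    have hdeg : 0 < G.deg v := (Set.ncard_pos (Set.toFinite _)).mpr ⟨u, hvu⟩
    have hzeros : (G.neighborSet v ∩ {u | G.starFun v u = 0}).ncard ≤ G.deg v :=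
      Set.ncard_le_ncard Set.inter_subset_left (Set.toFinite _)
    refine ⟨v, hvu.symm, ?_, ?_⟩ <;> rw [starFun_self] <;> omega

theorem sum_starFun (v : V) : ∑ u, G.starFun v u = Fintype.card V - G.deg v / 2 := by
  classical
  have hsplit : ∀ u, G.starFun v u =
      (if u = v then (G.deg v + 1) / 2 + 1 else 0) + if Gᶜ.Adj v u then 1 else 0 := by
    intro u
    by_cases h : u = v <;> simp [starFun, h, compl_adj, Ne.symm]
  have hcompl : ∑ u, (if Gᶜ.Adj v u then 1 else 0) = Fintype.card V - 1 - G.deg v := by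
    rw [← Finset.card_filter, ← neighborFinset_eq_filter, card_neighborFinset_eq_degree,
      degree_compl, deg_eq_degree]
  have hlt : G.deg v < Fintype.card V := by
    rw [deg_eq_degree]
    exact G.degree_lt_card_verts v
  simp only [hsplit, Finset.sum_add_distrib, Finset.sum_ite_eq', Finset.mem_univ, if_true, hcompl]
  omega

theorem gammaStR_le_card_sub_deg (v : V) : G.gammaStR ≤ Fintype.card V - G.deg v / 2 :=
  Nat.sInf_le ⟨G.starFun v, G.isStRDF_starFun v, G.sum_starFun v⟩

end Fintype

end SimpleGraph

/-- For any graph `G` of order `n`, `γ_{StR}(G) ≤ n − ⌊Δ(G)/2⌋`. -/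
theorem stmt2 {V : Type*} [Fintype V] (G : SimpleGraph V) :
    G.gammaStR ≤ Fintype.card V - G.maxDeg / 2 := by
  rcases isEmpty_or_nonempty V with hV | hV
  · have hzero : G.gammaStR = 0 :=
      Nat.eq_zero_of_le_zero <| Nat.sInf_le ⟨0, ⟨isEmptyElim, isEmptyElim⟩, by simp⟩
    simp [hzero]
  · obtain ⟨v, hv⟩ := G.exists_deg_eq_maxDeg
    exact hv ▸ G.gammaStR_le_card_sub_deg v
end

section
/- For a connected graph G of order n, γ_{StR}(G) = n if and only if G is K₁ or K₂ (i.e., n ≤ 2). -/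
section AuxStmt3

open SimpleGraph Finset

variable {V : Type*}

private lemma walk_closed_aux {G : SimpleGraph V} {a c : V} (p : G.Walk a c) (S : Set V)
    (ha : a ∈ S) (hS : ∀ x ∈ S, ∀ y, G.Adj x y → y ∈ S) : c ∈ S := by
  induction p with
  | nil => exact ha
  | cons h q ih => exact ih (hS _ ha _ h)

private lemma exists_adj_aux {G : SimpleGraph V} (hc : G.Connected) {a b : V} (hab : a ≠ b) :
    ∃ c, G.Adj a c := by
  obtain ⟨p⟩ := hc.preconnected a b
  cases p with
  | nil => exact absurd rfl hab
  | cons h q => exact ⟨_, h⟩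

private lemma exists_deg_two_aux [Fintype V] {G : SimpleGraph V} (hc : G.Connected)
    (h3 : 3 ≤ Fintype.card V) : ∃ w, 2 ≤ G.deg w := by
  classical
  by_contra hno
  push_neg at hno
  have key : ∀ x y : V, G.Adj x y → G.neighborSet x = {y} := by
    intro x y h
    have h1 : (G.neighborSet x).ncard ≤ 1 := by
      have := hno x; unfold SimpleGraph.deg at this; omega
    have := (Set.ncard_le_one (Set.toFinite _)).mp h1
    ext z
    simp only [Set.mem_singleton_iff]
    constructor
    · intro hz; exact this z hz y h
    · rintro rfl; exact h
  -- pick a and a neighbor b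
  obtain ⟨a⟩ : Nonempty V := hc.nonempty
  obtain ⟨b, hb⟩ : ∃ b, b ≠ a := by
    have h1 : 1 < Fintype.card V := by omega
    exact Fintype.exists_ne_of_one_lt_card h1 a
  obtain ⟨c, hac⟩ := exists_adj_aux hc (Ne.symm hb)
  -- S = {a, c} is closed
  set S : Set V := {a, c} with hSdef
  have hclosed : ∀ x ∈ S, ∀ y, G.Adj x y → y ∈ S := by
    intro x hx y hxy
    rcases hx with rfl | hx
    · have := key x y hxy
      have : y ∈ G.neighborSet x := hxy
      rw [key x c hac] at this
      exact Or.inr this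
    · rw [Set.mem_singleton_iff] at hx; subst hx
      have : y ∈ G.neighborSet x := hxy
      rw [key x a hac.symm] at this
      exact Or.inl this
  -- find a vertex outside {a, c}
  obtain ⟨z, hz⟩ : ∃ z : V, z ∉ ({a, c} : Finset V) := by
    by_contra hall
    push_neg at hall
    have : (Finset.univ : Finset V) ⊆ {a, c} := fun z _ => hall z
    have := Finset.card_le_card this
    simp only [Finset.card_univ] at this
    have h2 : ({a, c} : Finset V).card ≤ 2 := Finset.card_insert_le _ _ |>.trans (by simp)
    omega
  obtain ⟨p⟩ := hc.preconnected a z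
  have : z ∈ S := walk_closed_aux p S (Or.inl rfl) hclosed
  rcases this with rfl | hzc
  · simp at hz
  · rw [Set.mem_singleton_iff] at hzc; subst hzc; simp at hz

end AuxStmt3

/-- For a connected graph `G` of order `n`, `γ_{StR}(G) = n` iff `G` is `K₁` or `K₂`
(i.e. `n ≤ 2`). -/
theorem stmt3 {V : Type*} [Fintype V] (G : SimpleGraph V) (hc : G.Connected) :
    G.gammaStR = Fintype.card V ↔ Fintype.card V ≤ 2 := by
  classical
  have hne : Nonempty V := hc.nonempty
  have hone : G.IsStRDF (fun _ => 1) := by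
    refine ⟨fun v => Nat.le_add_left 1 _, fun v h => by simp at h⟩
  have hmem : Fintype.card V ∈ {k | ∃ f, G.IsStRDF f ∧ ∑ v, f v = k} :=
    ⟨_, hone, by simp⟩
  constructor
  · intro heq
    by_contra h2
    push_neg at h2
    have h3 : 3 ≤ Fintype.card V := h2
    obtain ⟨w, hd2⟩ := exists_deg_two_aux hc h3
    set n := Fintype.card V with hn
    set d := G.deg w with hddef
    -- the construction
    set f : V → ℕ := fun v => if v = w then 1 + (d + 1) / 2 else if G.Adj w v then 0 else 1
      with hfdef
    have hfw : f w = 1 + (d + 1) / 2 := by simp [hfdef]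
    have hfadj : ∀ v, v ≠ w → G.Adj w v → f v = 0 := by
      intro v hv ha; simp [hfdef, hv, ha]
    have hfother : ∀ v, v ≠ w → ¬ G.Adj w v → f v = 1 := by
      intro v hv ha; simp [hfdef, hv, ha]
    -- neighbor finset
    have hNfin : (G.neighborSet w).Finite := Set.toFinite _
    set s : Finset V := hNfin.toFinset with hsdef
    have hscard : s.card = d := by
      rw [hddef, SimpleGraph.deg, Set.ncard_eq_toFinset_card']
      simp [hsdef]
    have hwns : w ∉ s := by simp [hsdef]
    have hssub : s ⊆ Finset.univ.erase w := by
      intro x hx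
      simp only [hsdef, Set.Finite.mem_toFinset, SimpleGraph.mem_neighborSet] at hx
      exact Finset.mem_erase.mpr ⟨hx.ne', Finset.mem_univ x⟩
    have hdn : d ≤ n - 1 := by
      have := Finset.card_le_card hssub
      rwa [Finset.card_erase_of_mem (Finset.mem_univ w), Finset.card_univ, hscard, ← hn] at this
    -- sum computation
    have hfilter : (Finset.univ.erase w).filter (fun v => G.Adj w v) = s := by
      ext x
      simp only [Finset.mem_filter, Finset.mem_erase, Finset.mem_univ, true_and, and_true, hsdef,
        Set.Finite.mem_toFinset, SimpleGraph.mem_neighborSet]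
      exact ⟨fun h => h.2, fun h => ⟨h.ne', h⟩⟩
    have hsum_erase : ∑ v ∈ Finset.univ.erase w, f v
        = ((Finset.univ.erase w).filter (fun v => ¬ G.Adj w v)).card := by
      rw [Finset.card_filter]
      refine Finset.sum_congr rfl ?_
      intro v hv
      have hv' : v ≠ w := (Finset.mem_erase.mp hv).1
      by_cases ha : G.Adj w v
      · simp [hfadj v hv' ha, ha]
      · simp [hfother v hv' ha, ha]
    have hcards := Finset.card_filter_add_card_filter_not
      (s := Finset.univ.erase w) (p := fun v => G.Adj w v)
    rw [hfilter, hscard, Finset.card_erase_of_mem (Finset.mem_univ w), Finset.card_univ,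
      ← hn] at hcards
    have hsum : ∑ v, f v = 1 + (d + 1) / 2 + (n - 1 - d) := by
      rw [← Finset.add_sum_erase Finset.univ f (Finset.mem_univ w), hfw, hsum_erase]
      omega
    -- f is an StRDF
    have hdmax : d ≤ G.maxDeg := by
      rw [hddef, SimpleGraph.maxDeg]
      exact Finset.le_sup (Finset.mem_univ w)
    have hsrdf : G.IsStRDF f := by
      constructor
      · intro v
        by_cases hv : v = w
        · subst hv; rw [hfw]; omega
        · by_cases ha : G.Adj w v
          · rw [hfadj v hv ha]; omega
          · rw [hfother v hv ha]; omega
      · intro v hv0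
        have hv : v ≠ w := by
          intro h; subst h; rw [hfw] at hv0; omega
        have ha : G.Adj w v := by
          by_contra ha
          rw [hfother v hv ha] at hv0; omega
        refine ⟨w, ha.symm, ?_, ?_⟩
        · rw [hfw]; omega
        · have hle : (G.neighborSet w ∩ {u | f u = 0}).ncard ≤ d := by
            rw [hddef, SimpleGraph.deg]
            exact Set.ncard_le_ncard Set.inter_subset_left hNfin
          rw [hfw]; omega
    have hle : G.gammaStR ≤ ∑ v, f v := Nat.sInf_le ⟨f, hsrdf, rfl⟩
    rw [hsum] at hle
    rw [heq] at hle
    omega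
  · intro h2
    refine le_antisymm (Nat.sInf_le hmem) (le_csInf ⟨_, hmem⟩ ?_)
    rintro k ⟨f, hf, rfl⟩
    by_cases hz : ∃ v, f v = 0
    · obtain ⟨v, hv⟩ := hz
      obtain ⟨u, hadj, h2u, -⟩ := hf.2 v hv
      have : f u ≤ ∑ v, f v :=
        Finset.single_le_sum (fun i _ => Nat.zero_le _) (Finset.mem_univ u)
      omega
    · push_neg at hz
      have : Fintype.card V = ∑ _v : V, 1 := by simp
      rw [this]
      exact Finset.sum_le_sum fun i _ => Nat.one_le_iff_ne_zero.mpr (hz i)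
end

section
/- For any connected graph G of order n, γ_{StR}(G) ≤ n − ⌊(1 + diam(G))/3⌋, where diam(G) is the diameter of G. -/
open SimpleGraph Finset

lemma aux_dist_getVert_le {V : Type*} (G : SimpleGraph V) (hc : G.Connected) {u v : V}
    (p : G.Walk u v) (a k : ℕ) (h : a + k ≤ p.length) :
    G.dist (p.getVert a) (p.getVert (a + k)) ≤ k := by
  induction k with
  | zero => simp
  | succ k ih =>
    have h1 : a + k < p.length := by omega
    have hadj := p.adj_getVert_succ h1
    calc G.dist (p.getVert a) (p.getVert (a + (k+1)))
        ≤ G.dist (p.getVert a) (p.getVert (a+k)) +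
          G.dist (p.getVert (a+k)) (p.getVert (a+k+1)) := hc.dist_triangle
      _ ≤ k + 1 := by
          have h2 : G.dist (p.getVert (a+k)) (p.getVert (a+k+1)) ≤ 1 := by
            simpa using G.dist_le hadj.toWalk
          have h3 := ih (by omega)
          omega

lemma aux_geodesic_dist {V : Type*} (G : SimpleGraph V) (hc : G.Connected) {u v : V}
    (p : G.Walk u v) (hlen : p.length = G.dist u v) {a b : ℕ} (hab : a ≤ b)
    (hb : b ≤ p.length) : G.dist (p.getVert a) (p.getVert b) = b - a := by
  have hle : G.dist (p.getVert a) (p.getVert b) ≤ b - a := by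
    have := aux_dist_getVert_le G hc p a (b - a) (by omega)
    rwa [show a + (b - a) = b by omega] at this
  have h1 : G.dist u (p.getVert a) ≤ a := by
    have := aux_dist_getVert_le G hc p 0 a (by omega)
    simpa using this
  have h2 : G.dist (p.getVert b) v ≤ p.length - b := by
    have := aux_dist_getVert_le G hc p b (p.length - b) (by omega)
    rw [show b + (p.length - b) = p.length by omega, p.getVert_length] at this
    exact this
  have htri : G.dist u v ≤ G.dist u (p.getVert a) +
      (G.dist (p.getVert a) (p.getVert b) + G.dist (p.getVert b) v) :=
    le_trans hc.dist_triangle (by gcongr; exact hc.dist_triangle)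
  omega

/-- For any connected graph `G` of order `n`, `γ_{StR}(G) ≤ n − ⌊(1 + diam(G))/3⌋`. -/
theorem stmt4 {V : Type*} [Fintype V] (G : SimpleGraph V) (hc : G.Connected) :
    G.gammaStR ≤ Fintype.card V - (1 + G.diam) / 3 := by
  classical
  cases isEmpty_or_nonempty V with
  | inl h =>
    have h0 : (0:ℕ) ∈ {k | ∃ f, G.IsStRDF f ∧ ∑ v, f v = 0} := by
      refine ⟨fun _ => 1, ⟨fun x => isEmptyElim x, fun x => isEmptyElim x⟩, by simp⟩
    exact le_trans (Nat.sInf_le h0) (Nat.zero_le _)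
  | inr hne =>
    obtain ⟨u, v, huv⟩ := G.exists_dist_eq_diam
    obtain ⟨p, hplen⟩ := hc.exists_walk_length_eq_dist u v
    set d := G.diam with hd
    set t := (1 + d) / 3 with ht
    have hlen : p.length = d := by rw [hplen, huv]
    have h3t : 3 * t ≤ d + 1 := by omega
    -- injectivity of getVert
    have hinj : ∀ j j', j ≤ p.length → j' ≤ p.length → p.getVert j = p.getVert j' → j = j' := by
      intro j j' hj hj' heq
      rcases le_total j j' with hle | hle
      · have := aux_geodesic_dist G hc p hplen hle hj'
        rw [heq, SimpleGraph.dist_self] at this; omega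
      · have := aux_geodesic_dist G hc p hplen hle hj
        rw [heq, SimpleGraph.dist_self] at this; omega
    have hadjidx : ∀ j j', j ≤ p.length → j' ≤ p.length →
        G.Adj (p.getVert j) (p.getVert j') → (j' ≤ j + 1 ∧ j ≤ j' + 1) := by
      intro j j' hj hj' hadj
      have h1 : G.dist (p.getVert j) (p.getVert j') ≤ 1 := by
        simpa using G.dist_le hadj.toWalk
      rcases le_total j j' with hle | hle
      · have := aux_geodesic_dist G hc p hplen hle hj'; omega
      · have h2 : G.dist (p.getVert j') (p.getVert j) ≤ 1 := by
          simpa using G.dist_le hadj.symm.toWalk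
        have := aux_geodesic_dist G hc p hplen hle hj; omega
    set A : Finset V := (Finset.range t).image (fun i => p.getVert (3*i+1)) with hA
    set B0 : Finset V := (Finset.range t).image (fun i => p.getVert (3*i)) with hB0
    set B2 : Finset V := (Finset.range t).image (fun i => p.getVert (3*i+2)) with hB2
    set B : Finset V := B0 ∪ B2 with hB
    set f : V → ℕ := fun x => if x ∈ A then 2 else if x ∈ B then 0 else 1 with hf
    -- membership characterizations
    have hmemA : ∀ x, x ∈ A ↔ ∃ i < t, p.getVert (3*i+1) = x := by
      intro x; simp [hA]
    have hmemB : ∀ x, x ∈ B ↔ ∃ j ≤ p.length, (j % 3 = 0 ∨ j % 3 = 2) ∧ j < 3 * t ∧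
        p.getVert j = x := by
      intro x
      simp only [hB, hB0, hB2, Finset.mem_union, Finset.mem_image, Finset.mem_range]
      constructor
      · rintro (⟨i, hi, rfl⟩ | ⟨i, hi, rfl⟩)
        · exact ⟨3*i, by omega, by omega, by omega, rfl⟩
        · exact ⟨3*i+2, by omega, by omega, by omega, rfl⟩
      · rintro ⟨j, hj, hmod, hjt, rfl⟩
        rcases hmod with hm | hm
        · exact Or.inl ⟨j / 3, by omega, by rw [show 3 * (j/3) = j by omega]⟩
        · exact Or.inr ⟨j / 3, by omega, by rw [show 3 * (j/3) + 2 = j by omega]⟩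
    have hdisjAB : Disjoint A B := by
      rw [Finset.disjoint_left]
      intro x hxA hxB
      obtain ⟨i, hi, hix⟩ := (hmemA x).mp hxA
      obtain ⟨j, hj, hmod, hjt, hjx⟩ := (hmemB x).mp hxB
      have := hinj (3*i+1) j (by omega) hj (by rw [hix, hjx])
      omega
    -- f values
    have hfA : ∀ x ∈ A, f x = 2 := fun x hx => by simp [hf, hx]
    have hfB : ∀ x ∈ B, f x = 0 := fun x hx => by
      simp [hf, hx, Finset.disjoint_right.mp hdisjAB hx]
    have hfC : ∀ x, x ∉ A → x ∉ B → f x = 1 := fun x h1 h2 => by simp [hf, h1, h2]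
    have hfzero : ∀ x, f x = 0 ↔ x ∈ B := by
      intro x
      constructor
      · intro hx
        by_contra hxB
        by_cases hxA : x ∈ A
        · rw [hfA x hxA] at hx; omega
        · rw [hfC x hxA hxB] at hx; omega
      · exact hfB x
    -- the StRDF property
    have hstr : G.IsStRDF f := by
      constructor
      · intro x
        by_cases hxA : x ∈ A
        · obtain ⟨i, hi, hix⟩ := (hmemA x).mp hxA
          have hlen2 : 2 ≤ d := by omega
          have hadj01 : G.Adj (p.getVert 0) (p.getVert 1) := p.adj_getVert_succ (by omega)
          have hdeg : 1 ≤ G.deg (p.getVert 0) := by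
            have : (G.neighborSet (p.getVert 0)).Nonempty := ⟨p.getVert 1, hadj01⟩
            have := (Set.ncard_pos (Set.toFinite _)).mpr this
            exact this
          have hmax : G.deg (p.getVert 0) ≤ G.maxDeg := Finset.le_sup (Finset.mem_univ _)
          have h1 : 1 ≤ G.maxDeg := le_trans hdeg hmax
          rw [hfA x hxA]; omega
        · by_cases hxB : x ∈ B
          · rw [hfB x hxB]; omega
          · rw [hfC x hxA hxB]; omega
      · intro x hx
        obtain ⟨j, hj, hmod, hjt, hjx⟩ := (hmemB x).mp ((hfzero x).mp hx)
        -- the center index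
        obtain ⟨i, hi, hij⟩ : ∃ i, i < t ∧ (j = 3*i ∨ j = 3*i + 2) := by
          refine ⟨j / 3, by omega, by omega⟩
        set w := p.getVert (3*i+1) with hw
        have hwA : w ∈ A := (hmemA w).mpr ⟨i, hi, rfl⟩
        have hfw : f w = 2 := hfA w hwA
        have hadjxw : G.Adj x w := by
          rcases hij with rfl | rfl
          · rw [← hjx]; exact p.adj_getVert_succ (by omega)
          · rw [← hjx, hw, show 3*i+2 = (3*i+1)+1 by omega]
            exact (p.adj_getVert_succ (by omega)).symm
        refine ⟨w, hadjxw, by omega, ?_⟩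
        have hsub : G.neighborSet w ∩ {y | f y = 0} ⊆ {p.getVert (3*i), p.getVert (3*i+2)} := by
          rintro y ⟨hy1, hy2⟩
          obtain ⟨j', hj', hmod', hjt', hjy⟩ := (hmemB y).mp ((hfzero y).mp hy2)
          have hadjwy : G.Adj (p.getVert (3*i+1)) (p.getVert j') := by
            rw [hjy]; exact hy1
          have hidx := hadjidx (3*i+1) j' (by omega) hj' hadjwy
          have : j' = 3*i ∨ j' = 3*i+2 := by omega
          rcases this with rfl | rfl
          · exact Or.inl hjy.symm
          · exact Or.inr hjy.symm
        have hcard : (G.neighborSet w ∩ {y | f y = 0}).ncard ≤ 2 := by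
          calc (G.neighborSet w ∩ {y | f y = 0}).ncard
              ≤ ({p.getVert (3*i), p.getVert (3*i+2)} : Set V).ncard :=
                Set.ncard_le_ncard hsub (Set.toFinite _)
            _ ≤ 2 := by
                calc ({p.getVert (3*i), p.getVert (3*i+2)} : Set V).ncard
                    ≤ ({p.getVert (3*i+2)} : Set V).ncard + 1 := Set.ncard_insert_le _ _
                  _ = 2 := by rw [Set.ncard_singleton]
        rw [hfw]; omega
    -- cardinalities
    have hinjA : Set.InjOn (fun i => p.getVert (3*i+1)) (Finset.range t) := by
      intro a ha b hb hab
      simp only [Finset.coe_range, Set.mem_Iio] at ha hb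
      have := hinj (3*a+1) (3*b+1) (by omega) (by omega) hab
      omega
    have hinjB0 : Set.InjOn (fun i => p.getVert (3*i)) (Finset.range t) := by
      intro a ha b hb hab
      simp only [Finset.coe_range, Set.mem_Iio] at ha hb
      have := hinj (3*a) (3*b) (by omega) (by omega) hab
      omega
    have hinjB2 : Set.InjOn (fun i => p.getVert (3*i+2)) (Finset.range t) := by
      intro a ha b hb hab
      simp only [Finset.coe_range, Set.mem_Iio] at ha hb
      have := hinj (3*a+2) (3*b+2) (by omega) (by omega) hab
      omega
    have hcardA : A.card = t := by
      rw [hA, Finset.card_image_of_injOn hinjA, Finset.card_range]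
    have hdisjB : Disjoint B0 B2 := by
      rw [Finset.disjoint_left]
      rintro x hx0 hx2
      simp only [hB0, hB2, Finset.mem_image, Finset.mem_range] at hx0 hx2
      obtain ⟨a, ha, hax⟩ := hx0
      obtain ⟨b, hb, hbx⟩ := hx2
      have := hinj (3*a) (3*b+2) (by omega) (by omega) (by rw [hax, hbx])
      omega
    have hcardB : B.card = 2 * t := by
      rw [hB, Finset.card_union_of_disjoint hdisjB,
        Finset.card_image_of_injOn hinjB0, Finset.card_image_of_injOn hinjB2,
        Finset.card_range]
      omega
    have hcardAB : (A ∪ B).card = 3 * t := by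
      rw [Finset.card_union_of_disjoint hdisjAB, hcardA, hcardB]; omega
    have hABle : 3 * t ≤ Fintype.card V := by
      rw [← hcardAB, ← Finset.card_univ]
      exact Finset.card_le_card (Finset.subset_univ _)
    -- the sum
    have hsum : ∑ x, f x = Fintype.card V - 3 * t + 2 * t := by
      have hsplit := Finset.sum_sdiff (f := f) (Finset.subset_univ (A ∪ B))
      have hCsum : ∑ x ∈ Finset.univ \ (A ∪ B), f x = Fintype.card V - 3 * t := by
        rw [Finset.sum_congr rfl (fun x hx => by
          simp only [Finset.mem_sdiff, Finset.mem_union] at hx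
          exact hfC x (fun h => hx.2 (Or.inl h)) (fun h => hx.2 (Or.inr h)))]
        rw [Finset.sum_const, smul_eq_mul, mul_one, Finset.card_sdiff_of_subset (Finset.subset_univ _),
          Finset.card_univ, hcardAB]
      have hABsum : ∑ x ∈ A ∪ B, f x = 2 * t := by
        rw [Finset.sum_union hdisjAB,
          Finset.sum_congr rfl hfA, Finset.sum_congr rfl hfB,
          Finset.sum_const, Finset.sum_const, smul_eq_mul, smul_eq_mul, hcardA]
        omega
      rw [← hsplit, hCsum, hABsum]
    have hmem : (∑ x, f x) ∈ {k | ∃ g, G.IsStRDF g ∧ ∑ v, g v = k} := ⟨f, hstr, rfl⟩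
    calc G.gammaStR ≤ ∑ x, f x := Nat.sInf_le hmem
      _ ≤ Fintype.card V - (1 + d) / 3 := by rw [hsum]; omega
end

section
/- For any connected graph G of order n containing a cycle, γ_{StR}(G) ≤ n − ⌊g(G)/3⌋, where g(G) is the girth (length of a shortest cycle) of G. -/
/-!
A shortest cycle `v₀ v₁ … v_{g-1}` has no chords, so each of its vertices has only its two cycle
neighbours on it. Give `v_{3j+1}` the value 2 and `v_{3j}`, `v_{3j+2}` the value 0 for
`j < ⌊g/3⌋`, and every other vertex the value 1: each 0 sees a 2, each 2 sees at most two 0s,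
and the weight is `n - ⌊g/3⌋`.
-/

namespace SimpleGraph

variable {V : Type*} {G : SimpleGraph V}

namespace Walk

/-- A chord `uv` closes each of the two arcs of `c` between `u` and `v` into a cycle, so each arc
has length at least `girth - 1`, while the two add up to `girth ≥ 3`. -/
lemma IsCycle.mem_edges_of_adj_of_length_eq_girth {u v : V} {c : G.Walk u u} (hc : c.IsCycle)
    (hlen : c.length = G.girth) (hv : v ∈ c.support) (hadj : G.Adj u v) : s(u, v) ∈ c.edges := by
  classical
  by_contra hne
  have hG : ¬ G.IsAcyclic := fun h => h _ hc
  rw [← c.take_spec hv] at hc hlen hne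
  rw [edges_append, List.mem_append, not_or] at hne
  have hp : (cons hadj.symm (c.takeUntil v hv)).IsCycle :=
    (cons_isCycle_iff _ _).mpr ⟨hc.isPath_of_append_left (not_nil_of_ne hadj.ne.symm),
      by rw [Sym2.eq_swap]; exact hne.1⟩
  have hq : (cons hadj (c.dropUntil v hv)).IsCycle :=
    (cons_isCycle_iff _ _).mpr ⟨hc.isPath_of_append_right (not_nil_of_ne hadj.ne), hne.2⟩
  have hp_len := girth_le_length hp
  have hq_len := girth_le_length hq
  have := three_le_girth hG
  simp only [length_cons, length_append] at hp_len hq_len hlen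
  omega

lemma IsCycle.isChordless_of_length_eq_girth {u : V} {c : G.Walk u u} (hc : c.IsCycle)
    (hlen : c.length = G.girth) : c.IsChordless := by
  classical
  refine isChordless_iff_forall_mem_edges.mpr fun x y hx hy hadj => ?_
  rw [← (c.rotate_edges x hx).perm.mem_iff]
  exact (hc.rotate hx).mem_edges_of_adj_of_length_eq_girth (by rwa [length_rotate])
    ((c.mem_support_rotate_iff x hx).mpr hy) hadj

lemma IsChordless.ncard_neighborSet_inter_le_two {u w : V} {c : G.Walk u u} (hch : c.IsChordless)
    (hc : c.IsCycle) (hw : w ∈ c.support) {s : Set V} (hs : s ⊆ {v | v ∈ c.support}) :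
    (G.neighborSet w ∩ s).ncard ≤ 2 := by
  rw [← hc.ncard_neighborSet_toSubgraph_eq_two hw]
  refine Set.ncard_le_ncard (fun v ⟨hadj, hv⟩ => ?_) c.finite_neighborSet_toSubgraph
  exact Subgraph.mem_edgeSet.mp (c.mem_edges_toSubgraph.mpr (hch.mem_edges hw (hs hv) hadj))

end Walk

section StrongRoman

variable [Fintype V]

lemma one_le_maxDeg_of_adj {u v : V} (h : G.Adj u v) : 1 ≤ G.maxDeg :=
  calc 1 ≤ G.deg u := (Set.ncard_pos).mpr ⟨v, h⟩
    _ ≤ G.maxDeg := Finset.le_sup (f := G.deg) (Finset.mem_univ u)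

variable [DecidableEq V]

def twoZeroOne (T Z : Finset V) (v : V) : ℕ := if v ∈ T then 2 else if v ∈ Z then 0 else 1

lemma isStRDF_twoZeroOne {T Z : Finset V} (hΔ : 1 ≤ G.maxDeg)
    (hdom : ∀ z ∈ Z, ∃ t ∈ T, G.Adj z t) (hnbr : ∀ t ∈ T, (G.neighborSet t ∩ Z).ncard ≤ 2) :
    G.IsStRDF (twoZeroOne T Z) := by
  have hzero : {u | twoZeroOne T Z u = 0} ⊆ Z := fun u hu => by
    simp only [Set.mem_ofPred_eq, twoZeroOne] at hu
    split_ifs at hu with hT hZ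
    exact hZ
  refine ⟨fun v => ?_, fun v hv => ?_⟩
  · have : twoZeroOne T Z v ≤ 2 := by unfold twoZeroOne; split_ifs <;> omega
    omega
  · obtain ⟨t, ht, hadj⟩ := hdom v (hzero hv)
    have hcard := (Set.ncard_le_ncard (Set.inter_subset_inter_right _ hzero)).trans (hnbr t ht)
    have ht2 : twoZeroOne T Z t = 2 := if_pos ht
    refine ⟨t, hadj, ht2.ge, ?_⟩
    rw [ht2]
    omega

lemma sum_twoZeroOne_add_card {T Z : Finset V} (hTZ : Disjoint T Z) :
    ∑ v, twoZeroOne T Z v + Z.card = Fintype.card V + T.card := by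
  calc ∑ v, twoZeroOne T Z v + Z.card
      = ∑ v, (twoZeroOne T Z v + if v ∈ Z then 1 else 0) := by
        rw [Finset.sum_add_distrib, Finset.sum_boole]; simp
    _ = ∑ v, (1 + if v ∈ T then 1 else 0) := by
        refine Finset.sum_congr rfl fun v _ => ?_
        by_cases hT : v ∈ T
        · simp [twoZeroOne, hT, Finset.disjoint_left.mp hTZ hT]
        · unfold twoZeroOne; split_ifs <;> simp
    _ = Fintype.card V + T.card := by
        rw [Finset.sum_add_distrib, Finset.sum_boole]; simp

lemma gammaStR_add_card_le {T Z : Finset V} (hTZ : Disjoint T Z) (hΔ : 1 ≤ G.maxDeg)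
    (hdom : ∀ z ∈ Z, ∃ t ∈ T, G.Adj z t) (hnbr : ∀ t ∈ T, (G.neighborSet t ∩ Z).ncard ≤ 2) :
    G.gammaStR + Z.card ≤ Fintype.card V + T.card := by
  have hγ : G.gammaStR ≤ ∑ v, twoZeroOne T Z v :=
    Nat.sInf_le ⟨_, isStRDF_twoZeroOne hΔ hdom hnbr, rfl⟩
  have := sum_twoZeroOne_add_card hTZ
  omega

end StrongRoman

lemma Walk.adj_getVert_three_mul_div_three_add_one {u v : V} (c : G.Walk u v) {i : ℕ}
    (hi : i < c.length) (hi1 : i % 3 ≠ 1) : G.Adj (c.getVert i) (c.getVert (3 * (i / 3) + 1)) := by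
  rcases (by omega : i = 3 * (i / 3) ∨ i = 3 * (i / 3) + 2) with h | h
  · rw [show 3 * (i / 3) + 1 = i + 1 by omega]
    exact c.adj_getVert_succ hi
  · have := c.adj_getVert_succ (i := 3 * (i / 3) + 1) (by omega)
    rw [← h] at this
    exact this.symm

lemma Walk.IsChordless.gammaStR_add_length_div_three_le [Fintype V] {u : V} {c : G.Walk u u}
    (hch : c.IsChordless) (hc : c.IsCycle) : G.gammaStR + c.length / 3 ≤ Fintype.card V := by
  classical
  set k := c.length / 3
  set T := (Finset.range k).image fun j => c.getVert (3 * j + 1)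
  set S := (Finset.range (3 * k)).image c.getVert
  have hlen := hc.three_le_length
  have hinj : Set.InjOn c.getVert (Finset.range (3 * k)) := fun i hi j hj h => by
    simp only [Finset.coe_range, Set.mem_Iio] at hi hj
    exact hc.getVert_injOn' (show i ≤ c.length - 1 by omega) (show j ≤ c.length - 1 by omega) h
  have hTS : T ⊆ S := Finset.image_subset_iff.mpr fun j hj =>
    Finset.mem_image_of_mem _ (by rw [Finset.mem_range] at hj ⊢; omega)
  have hT : T.card = k := by
    refine (Finset.card_image_of_injOn fun i hi j hj h => ?_).trans (Finset.card_range k)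
    simp only [Finset.coe_range, Set.mem_Iio] at hi hj
    have := hinj (by simp only [Finset.coe_range, Set.mem_Iio]; omega)
      (by simp only [Finset.coe_range, Set.mem_Iio]; omega) h
    omega
  have hS : S.card = 3 * k := by rw [Finset.card_image_of_injOn hinj, Finset.card_range]
  have hZ : (S \ T).card = 2 * k := by rw [Finset.card_sdiff_of_subset hTS]; omega
  have hdom : ∀ z ∈ S \ T, ∃ t ∈ T, G.Adj z t := by
    intro z hz
    obtain ⟨hzS, hzT⟩ := Finset.mem_sdiff.mp hz
    obtain ⟨i, hi, rfl⟩ := Finset.mem_image.mp hzS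
    rw [Finset.mem_range] at hi
    have hmid : c.getVert (3 * (i / 3) + 1) ∈ T :=
      Finset.mem_image_of_mem _ (Finset.mem_range.mpr (by omega))
    have hi1 : i % 3 ≠ 1 := fun h1 => hzT (by rwa [show 3 * (i / 3) + 1 = i by omega] at hmid)
    exact ⟨_, hmid, c.adj_getVert_three_mul_div_three_add_one (by omega) hi1⟩
  have hsupp : ((S \ T : Finset V) : Set V) ⊆ {v | v ∈ c.support} := fun v hv => by
    obtain ⟨i, -, rfl⟩ := Finset.mem_image.mp (Finset.mem_sdiff.mp hv).1
    exact c.getVert_mem_support i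
  have hnbr : ∀ t ∈ T, (G.neighborSet t ∩ ↑(S \ T)).ncard ≤ 2 := fun t ht => by
    obtain ⟨j, -, rfl⟩ := Finset.mem_image.mp ht
    exact hch.ncard_neighborSet_inter_le_two hc (c.getVert_mem_support _) hsupp
  have := gammaStR_add_card_le Finset.disjoint_sdiff
    (one_le_maxDeg_of_adj (c.adj_getVert_succ (i := 0) (by omega))) hdom hnbr
  omega

end SimpleGraph

open SimpleGraph

theorem stmt5_general {V : Type*} [Fintype V] (G : SimpleGraph V)
    (hg : ¬ G.IsAcyclic) :
    G.gammaStR ≤ Fintype.card V - G.girth / 3 := by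
  obtain ⟨_, c, hc, hlen⟩ := exists_girth_eq_length.mpr hg
  have := (hc.isChordless_of_length_eq_girth hlen.symm).gammaStR_add_length_div_three_le hc
  omega

/-- For any connected graph `G` of order `n` containing a cycle,
`γ_{StR}(G) ≤ n − ⌊g(G)/3⌋`, where `g(G)` is the girth of `G`. -/
theorem stmt5 {V : Type*} [Fintype V] (G : SimpleGraph V) (hc : G.Connected)
    (hg : ¬ G.IsAcyclic) :
    G.gammaStR ≤ Fintype.card V - G.girth / 3 :=
  stmt5_general G hg
end

section
/- If G is a graph of odd order n, then γ_{StR}(G) = (n+1)/2 if and only if G has a vertex of degree n−1 (a universal vertex). -/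
open Finset

-- key lower-bound lemma
lemma lb {V : Type*} [Fintype V] (G : SimpleGraph V) (f : V → ℕ) (hf : G.IsStRDF f)
    (hV : 0 < Fintype.card V) :
    Fintype.card V + (Finset.univ.filter (fun w => f w ≠ 0)).card ≤ 2 * ∑ v, f v ∧
    1 ≤ (Finset.univ.filter (fun w => f w ≠ 0)).card := by
  classical
  set B0 : Finset V := Finset.univ.filter (fun v => f v = 0) with hB0
  set Bp : Finset V := Finset.univ.filter (fun v => f v ≠ 0) with hBp
  have hsplit : B0.card + Bp.card = Fintype.card V := by
    rw [hB0, hBp, Finset.card_filter_add_card_filter_not, Finset.card_univ]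
  set dcard : V → ℕ := fun w => ((G.neighborFinset w).filter (fun u => f u = 0)).card with hd
  have hncard : ∀ w, (G.neighborSet w ∩ {u | f u = 0}).ncard = dcard w := by
    intro w
    have h1 : G.neighborSet w ∩ {u | f u = 0}
        = ↑((G.neighborFinset w).filter (fun u => f u = 0)) := by
      ext u; simp [SimpleGraph.mem_neighborFinset]
    rw [h1, Set.ncard_coe_finset]
  set D : Finset V := Finset.univ.filter (fun w => 2 ≤ f w ∧ 1 + (dcard w + 1) / 2 ≤ f w) with hD
  have hsub : B0 ⊆ D.biUnion (fun w => (G.neighborFinset w).filter (fun u => f u = 0)) := by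
    intro v hv
    rw [hB0, Finset.mem_filter] at hv
    obtain ⟨w, hadj, h2, h3⟩ := hf.2 v hv.2
    rw [hncard] at h3
    refine Finset.mem_biUnion.2 ⟨w, ?_, ?_⟩
    · rw [hD, Finset.mem_filter]; exact ⟨Finset.mem_univ _, h2, h3⟩
    · rw [Finset.mem_filter]; exact ⟨(SimpleGraph.mem_neighborFinset _ _ _).2 hadj.symm, hv.2⟩
  have hcard0 : B0.card ≤ ∑ w ∈ D, dcard w :=
    (Finset.card_le_card hsub).trans (Finset.card_biUnion_le)
  have hDsub : D ⊆ Bp := by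
    intro w hw
    rw [hD, Finset.mem_filter] at hw
    rw [hBp, Finset.mem_filter]
    exact ⟨Finset.mem_univ _, by omega⟩
  have h1 : B0.card + 2 * D.card ≤ ∑ w ∈ D, 2 * f w := by
    have : ∑ w ∈ D, (dcard w + 2) ≤ ∑ w ∈ D, 2 * f w := by
      refine Finset.sum_le_sum fun w hw => ?_
      rw [hD, Finset.mem_filter] at hw
      omega
    rw [Finset.sum_add_distrib, Finset.sum_const, smul_eq_mul] at this
    omega
  have h2 : 2 * (Bp \ D).card ≤ ∑ w ∈ Bp \ D, 2 * f w := by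
    have : ∑ w ∈ Bp \ D, 2 ≤ ∑ w ∈ Bp \ D, 2 * f w := by
      refine Finset.sum_le_sum fun w hw => ?_
      have := (Finset.mem_sdiff.1 hw).1
      rw [hBp, Finset.mem_filter] at this
      omega
    simpa [mul_comm] using this
  have h3 : ∑ w ∈ Bp \ D, 2 * f w + ∑ w ∈ D, 2 * f w = ∑ w ∈ Bp, 2 * f w :=
    Finset.sum_sdiff hDsub
  have h4 : ∑ w ∈ Bp, f w = ∑ v, f v := Finset.sum_filter_ne_zero _
  have h5 : ∑ w ∈ Bp, 2 * f w = 2 * ∑ v, f v := by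
    rw [← Finset.mul_sum, h4]
  have hcardD : (Bp \ D).card + D.card = Bp.card := Finset.card_sdiff_add_card_eq_card hDsub
  have hne : 1 ≤ Bp.card := by
    obtain ⟨v⟩ := Fintype.card_pos_iff.1 hV
    rcases eq_or_ne (f v) 0 with h | h
    · obtain ⟨w, _, h2', _⟩ := hf.2 v h
      refine Finset.card_pos.2 ⟨w, ?_⟩
      rw [hBp, Finset.mem_filter]; exact ⟨Finset.mem_univ _, by omega⟩
    · refine Finset.card_pos.2 ⟨v, ?_⟩
      rw [hBp, Finset.mem_filter]; exact ⟨Finset.mem_univ _, h⟩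
  exact ⟨by omega, hne⟩

lemma compl_ncard {V : Type*} [Fintype V] (w : V) :
    ({w}ᶜ : Set V).ncard = Fintype.card V - 1 := by
  have h := Set.ncard_add_ncard_compl ({w} : Set V)
  rw [Set.ncard_singleton, Nat.card_eq_fintype_card] at h
  omega

lemma Sne {V : Type*} [Fintype V] (G : SimpleGraph V) :
    {k | ∃ f, G.IsStRDF f ∧ ∑ v, f v = k}.Nonempty :=
  ⟨_, ⟨fun _ => 1, ⟨fun v => Nat.le_add_left 1 _, fun v hv => by simp at hv⟩, rfl⟩⟩

/-- If `G` has odd order `n`, then `γ_{StR}(G) = (n+1)/2` iff `G` has a universal vertex. -/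
theorem stmt7 {V : Type*} [Fintype V] (G : SimpleGraph V) (hodd : Odd (Fintype.card V)) :
    G.gammaStR = (Fintype.card V + 1) / 2 ↔ ∃ v, G.deg v = Fintype.card V - 1 := by
  classical
  obtain ⟨m, hm⟩ := hodd
  have hV : 0 < Fintype.card V := by omega
  constructor
  · intro hγ
    have hmem := Nat.sInf_mem (Sne G)
    rw [SimpleGraph.gammaStR] at hγ
    rw [hγ] at hmem
    obtain ⟨f, hf, hsum⟩ := hmem
    obtain ⟨hlb, hne⟩ := lb G f hf hV
    rw [hsum] at hlb
    clear hγ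
    have hcard1 : (Finset.univ.filter (fun v => f v ≠ 0)).card = 1 := by omega
    obtain ⟨w, hw⟩ := Finset.card_eq_one.1 hcard1
    have hzero : ∀ u, u ≠ w → f u = 0 := by
      intro u hu
      by_contra h
      have : u ∈ Finset.univ.filter (fun v => f v ≠ 0) :=
        Finset.mem_filter.2 ⟨Finset.mem_univ _, h⟩
      rw [hw, Finset.mem_singleton] at this
      exact hu this
    have hadj : ∀ u, u ≠ w → G.Adj w u := by
      intro u hu
      obtain ⟨w', hadj', h2', _⟩ := hf.2 u (hzero u hu)
      have : w' ∈ Finset.univ.filter (fun v => f v ≠ 0) :=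
        Finset.mem_filter.2 ⟨Finset.mem_univ _, by omega⟩
      rw [hw, Finset.mem_singleton] at this
      subst this
      exact hadj'.symm
    refine ⟨w, ?_⟩
    have hset : G.neighborSet w = ({w}ᶜ : Set V) := by
      ext u
      simp only [SimpleGraph.mem_neighborSet, Set.mem_compl_iff, Set.mem_singleton_iff]
      exact ⟨fun h => (G.ne_of_adj h).symm, fun h => hadj u h⟩
    rw [SimpleGraph.deg, hset, compl_ncard]
  · rintro ⟨v, hv⟩
    have hadj : ∀ u, u ≠ v → G.Adj v u := by
      have hsub : G.neighborSet v ⊆ ({v}ᶜ : Set V) := by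
        intro u hu
        simp only [Set.mem_compl_iff, Set.mem_singleton_iff]
        exact fun h => G.irrefl (h ▸ hu)
      have heq : G.neighborSet v = ({v}ᶜ : Set V) := by
        refine Set.eq_of_subset_of_ncard_le hsub ?_ (Set.toFinite _)
        rw [compl_ncard]
        exact hv.ge
      intro u hu
      have : u ∈ G.neighborSet v := by
        rw [heq]; simpa using hu
      exact this
    have hmax : Fintype.card V - 1 ≤ G.maxDeg := hv ▸ Finset.le_sup (Finset.mem_univ v)
    have hfSt : G.IsStRDF (fun u => if u = v then (Fintype.card V + 1) / 2 else 0) := by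
      constructor
      · intro u
        by_cases h : u = v
        · subst h; beta_reduce; rw [if_pos rfl]; omega
        · simp [h]
      · intro u hu
        simp only at hu
        have huv : u ≠ v := by
          intro h; rw [if_pos h] at hu; omega
        have hcard2 : 2 ≤ Fintype.card V := Fintype.one_lt_card_iff_nontrivial.2 ⟨u, v, huv⟩
        have hlt : ∀ s : Set V, (G.neighborSet v ∩ s).ncard ≤ Fintype.card V - 1 := by
          intro s
          calc (G.neighborSet v ∩ s).ncard ≤ (({v}ᶜ : Set V)).ncard := by
                refine Set.ncard_le_ncard ?_ (Set.toFinite _)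
                intro x hx
                have := hx.1
                simp only [Set.mem_compl_iff, Set.mem_singleton_iff]
                exact fun h => G.irrefl (h ▸ this)
            _ = Fintype.card V - 1 := compl_ncard v
        refine ⟨v, (hadj u huv).symm, ?_, ?_⟩
        · beta_reduce; rw [if_pos rfl]; omega
        · have := hlt {u | (if u = v then (Fintype.card V + 1) / 2 else 0) = 0}
          beta_reduce; rw [if_pos rfl]
          omega
    have hsum : ∑ u, (fun u => if u = v then (Fintype.card V + 1) / 2 else 0) u
        = (Fintype.card V + 1) / 2 := by
      simp
    have hle : G.gammaStR ≤ (Fintype.card V + 1) / 2 := Nat.sInf_le ⟨_, hfSt, hsum⟩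
    have hge : (Fintype.card V + 1) / 2 ≤ G.gammaStR := by
      obtain ⟨g, hg, hgsum⟩ := Nat.sInf_mem (Sne G)
      obtain ⟨hlb, hne⟩ := lb G g hg hV
      rw [SimpleGraph.gammaStR, ← hgsum]; clear hgsum
      omega
    omega
end

section
/- If T is a spider obtained from the star K_{1,t} (t ≥ 2) by subdividing q of its edges (0 ≤ q ≤ t), then γ_{StR}(T) = 1 + q + ⌈t/2⌉. -/
/-- The spider obtained from the star `K_{1,t}` by subdividing the first `q` edges
(`q ≤ t`). `none` is the center, `some (.inl i)` is the leaf `vᵢ`, and `some (.inr j)`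
is the subdivision vertex `uⱼ` on the edge to leaf `v_j` (for `j < q`). -/
def spiderGraph (t q : ℕ) : SimpleGraph (Option (Fin t ⊕ Fin q)) where
  Adj a b :=
    (∃ i : Fin t, q ≤ (i : ℕ) ∧
      ((a = none ∧ b = some (.inl i)) ∨ (b = none ∧ a = some (.inl i)))) ∨
    (∃ j : Fin q,
      (a = none ∧ b = some (.inr j)) ∨ (b = none ∧ a = some (.inr j))) ∨
    (∃ (i : Fin t) (j : Fin q), (i : ℕ) = (j : ℕ) ∧
      ((a = some (.inl i) ∧ b = some (.inr j)) ∨ (b = some (.inl i) ∧ a = some (.inr j))))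
  symm := by
    constructor
    rintro a b (⟨i, hi, h⟩ | ⟨j, h⟩ | ⟨i, j, hij, h⟩)
    · exact Or.inl ⟨i, hi, h.symm⟩
    · exact Or.inr (Or.inl ⟨j, h.symm⟩)
    · exact Or.inr (Or.inr ⟨i, j, hij, h.symm⟩)
  loopless := by
    constructor
    rintro a (⟨i, hi, (⟨h1, h2⟩ | ⟨h1, h2⟩)⟩ | ⟨j, (⟨h1, h2⟩ | ⟨h1, h2⟩)⟩ |
      ⟨i, j, hij, (⟨h1, h2⟩ | ⟨h1, h2⟩)⟩) <;> simp_all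

/-!
Apart from the centre `c`, the spider splits into `t` branches `{vᵢ}` or `{uᵢ, vᵢ}`. A strong
Roman dominating function `f` puts at least the branch size on every branch, except that a
branch may lose one unit when its root (the neighbour of `c` on it) has value `0` and no
neighbour of value `≥ 2` other than `c`. If there are `r > 0` such branches, `c` must strongly
dominate their roots, so `f c ≥ 1 + ⌈r/2⌉` and the total weight is at least
`1 + t + q - ⌊r/2⌋ ≥ 1 + q + ⌈t/2⌉`, since `r ≤ t`. If `r = 0` the branches alone weigh
`t + q`, which is enough once `t ≥ 2`. Weight `1 + ⌈t/2⌉` on `c` and `1` on each leaf of a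
subdivided edge attains the bound.
-/

namespace SimpleGraph

variable {V : Type*} [Fintype V] {G : SimpleGraph V} {f : V → ℕ}

lemma IsStRDF.le_of_unique_witness (hf : G.IsStRDF f) {x c : V} (hx : f x = 0)
    (hc : ∀ y, G.Adj x y → 2 ≤ f y → y = c) :
    1 + ((G.neighborSet c ∩ {u | f u = 0}).ncard + 1) / 2 ≤ f c := by
  obtain ⟨w, hxw, hw, hwx⟩ := hf.2 x hx
  obtain rfl := hc w hxw hw
  exact hwx

end SimpleGraph

lemma Fin.sum_univ_eq_sum_dite {M : Type*} [AddCommMonoid M] {q t : ℕ} (hq : q ≤ t)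
    (g : Fin q → M) : ∑ j, g j = ∑ i : Fin t, if h : (i : ℕ) < q then g ⟨i, h⟩ else 0 := by
  rw [Finset.sum_fin_eq_sum_range,
    Fin.sum_univ_eq_sum_range (fun i => if h : i < q then g ⟨i, h⟩ else 0)]
  exact Finset.sum_subset (Finset.range_subset_range.2 hq) fun i _ hi => by simp_all

namespace spiderGraph

open SimpleGraph Finset

variable {t q : ℕ}

lemma adj_none_iff {w : Option (Fin t ⊕ Fin q)} :
    (spiderGraph t q).Adj none w ↔
      (∃ i : Fin t, q ≤ (i : ℕ) ∧ w = some (.inl i)) ∨ ∃ j : Fin q, w = some (.inr j) := by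
  simp [spiderGraph]

lemma adj_inl_iff_of_lt {i : Fin t} (hi : (i : ℕ) < q) {w : Option (Fin t ⊕ Fin q)} :
    (spiderGraph t q).Adj (some (.inl i)) w ↔ w = some (.inr ⟨i, hi⟩) := by
  simp only [spiderGraph]
  constructor
  · rintro (⟨_, h, _ | _⟩ | ⟨_, _ | _⟩ | ⟨_, j, hij, ⟨⟨⟩, rfl⟩ | ⟨_, _⟩⟩) <;> simp_all [Fin.ext_iff]
    omega
  · rintro rfl
    exact Or.inr (Or.inr ⟨i, _, rfl, Or.inl ⟨rfl, rfl⟩⟩)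

lemma adj_inl_iff_of_le {i : Fin t} (hi : q ≤ (i : ℕ)) {w : Option (Fin t ⊕ Fin q)} :
    (spiderGraph t q).Adj (some (.inl i)) w ↔ w = none := by
  simp only [spiderGraph]
  constructor
  · rintro (⟨_, h, _ | _⟩ | ⟨_, _ | _⟩ | ⟨_, j, hij, ⟨⟨⟩, rfl⟩ | ⟨_, _⟩⟩) <;> simp_all
    omega
  · rintro rfl
    exact Or.inl ⟨i, hi, Or.inr ⟨rfl, rfl⟩⟩

lemma adj_inr_iff {j : Fin q} {w : Option (Fin t ⊕ Fin q)} :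
    (spiderGraph t q).Adj (some (.inr j)) w ↔
      w = none ∨ ∃ i : Fin t, (i : ℕ) = j ∧ w = some (.inl i) := by
  simp [spiderGraph]

/-- The neighbour of the centre on the `i`-th branch: `uᵢ` if that edge is subdivided, else `vᵢ`. -/
def root (t q : ℕ) (i : Fin t) : Option (Fin t ⊕ Fin q) :=
  if h : (i : ℕ) < q then some (.inr ⟨i, h⟩) else some (.inl i)

lemma root_injective : Function.Injective (root t q) := by
  intro a b hab
  unfold root at hab
  split_ifs at hab <;> simp_all [Fin.ext_iff]

lemma adj_none_root (i : Fin t) : (spiderGraph t q).Adj none (root t q i) := by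
  rw [adj_none_iff, root]
  split_ifs with h
  · exact Or.inr ⟨_, rfl⟩
  · exact Or.inl ⟨i, not_lt.1 h, rfl⟩

lemma range_root (hq : q ≤ t) : Set.range (root t q) = (spiderGraph t q).neighborSet none := by
  refine Set.Subset.antisymm (Set.range_subset_iff.2 adj_none_root) fun w hw => ?_
  obtain ⟨i, hi, rfl⟩ | ⟨j, rfl⟩ := adj_none_iff.1 hw
  · exact ⟨i, dif_neg (not_lt.2 hi)⟩
  · exact ⟨⟨j, j.2.trans_le hq⟩, dif_pos j.2⟩

lemma deg_none (hq : q ≤ t) : (spiderGraph t q).deg none = t := by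
  rw [deg, ← range_root hq, ← Set.image_univ, Set.ncard_image_of_injective _ root_injective,
    Set.ncard_univ, Nat.card_eq_fintype_card, Fintype.card_fin]

lemma le_maxDeg (hq : q ≤ t) : t ≤ (spiderGraph t q).maxDeg :=
  (deg_none hq).ge.trans (le_sup (f := (spiderGraph t q).deg) (mem_univ none))

lemma ncard_neighborSet_none_inter_le (hq : q ≤ t) (s : Set (Option (Fin t ⊕ Fin q))) :
    ((spiderGraph t q).neighborSet none ∩ s).ncard ≤ t :=
  (Set.ncard_le_ncard Set.inter_subset_left (Set.toFinite _)).trans (deg_none hq).le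

def branchWeight (f : Option (Fin t ⊕ Fin q) → ℕ) (i : Fin t) : ℕ :=
  f (some (.inl i)) + if h : (i : ℕ) < q then f (some (.inr ⟨i, h⟩)) else 0

lemma sum_eq_add_sum_branchWeight (hq : q ≤ t) (f : Option (Fin t ⊕ Fin q) → ℕ) :
    ∑ v, f v = f none + ∑ i, branchWeight f i := by
  rw [Fintype.sum_option, Fintype.sum_sum_type, Fin.sum_univ_eq_sum_dite hq, ← sum_add_distrib]
  rfl

def centerStRDF (t q : ℕ) : Option (Fin t ⊕ Fin q) → ℕ
  | none => 1 + (t + 1) / 2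
  | some (.inl i) => if (i : ℕ) < q then 1 else 0
  | some (.inr _) => 0

lemma isStRDF_centerStRDF (ht : 1 ≤ t) (hq : q ≤ t) :
    (spiderGraph t q).IsStRDF (centerStRDF t q) := by
  have hΔ : (t + 1) / 2 ≤ ((spiderGraph t q).maxDeg + 1) / 2 :=
    Nat.div_le_div_right (Nat.add_le_add_right (le_maxDeg hq) 1)
  have hcenter := ncard_neighborSet_none_inter_le hq {u | centerStRDF t q u = 0}
  have hstrong : 1 + (((spiderGraph t q).neighborSet none ∩ {u | centerStRDF t q u = 0}).ncard
      + 1) / 2 ≤ centerStRDF t q none :=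
    Nat.add_le_add_left (Nat.div_le_div_right (Nat.add_le_add_right hcenter 1)) 1
  have htwo : 2 ≤ centerStRDF t q none := by simp only [centerStRDF]; omega
  refine ⟨fun v => ?_, fun v hv => ⟨none, ?_, htwo, hstrong⟩⟩
  · rcases v with _ | i | j <;> simp only [centerStRDF] <;> (try split_ifs) <;> omega
  · rcases v with _ | i | j
    · simp [centerStRDF] at hv
    · have hi : q ≤ (i : ℕ) := by simpa [centerStRDF] using hv
      exact (adj_inl_iff_of_le hi).2 rfl
    · exact adj_inr_iff.2 (Or.inl rfl)

lemma sum_centerStRDF (hq : q ≤ t) : ∑ v, centerStRDF t q v = 1 + q + (t + 1) / 2 := by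
  have hbranch (i : Fin t) : branchWeight (centerStRDF t q) i = if (i : ℕ) < q then 1 else 0 := by
    simp only [branchWeight, centerStRDF]
    split_ifs <;> rfl
  rw [sum_eq_add_sum_branchWeight hq, Fintype.sum_congr _ _ hbranch, sum_boole,
    Fin.card_filter_val_lt, min_eq_right hq, Nat.cast_id]
  simp only [centerStRDF]
  omega

variable {f : Option (Fin t ⊕ Fin q) → ℕ}

open Classical in
noncomputable def centerDependent (f : Option (Fin t ⊕ Fin q) → ℕ) : Finset (Fin t) :=
  {i | f (root t q i) = 0 ∧ ∀ y, (spiderGraph t q).Adj (root t q i) y → 2 ≤ f y → y = none}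

lemma mem_centerDependent {i : Fin t} : i ∈ centerDependent f ↔
    f (root t q i) = 0 ∧ ∀ y, (spiderGraph t q).Adj (root t q i) y → 2 ≤ f y → y = none := by
  simp [centerDependent]

lemma branch_size_le (hf : (spiderGraph t q).IsStRDF f) (i : Fin t) :
    1 + (if (i : ℕ) < q then 1 else 0) ≤
      branchWeight f i + if i ∈ centerDependent f then 1 else 0 := by
  by_cases hi : (i : ℕ) < q
  · have hroot : root t q i = some (.inr ⟨i, hi⟩) := dif_pos hi
    have hv : f (some (.inl i)) = 0 → 2 ≤ f (some (.inr ⟨i, hi⟩)) := fun h0 => by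
      obtain ⟨y, hy, h2, -⟩ := hf.2 _ h0
      rwa [(adj_inl_iff_of_lt hi).1 hy] at h2
    have hu : ∀ y, (spiderGraph t q).Adj (some (.inr ⟨i, hi⟩)) y → 2 ≤ f y → y ≠ none →
        2 ≤ f (some (.inl i)) := by
      intro y hy h2 hne
      obtain rfl | ⟨i', hi', rfl⟩ := adj_inr_iff.1 hy
      · exact absurd rfl hne
      · rwa [Fin.ext hi'] at h2
    simp only [branchWeight, hi, dif_pos, if_true]
    split_ifs with h <;> rw [mem_centerDependent, hroot] at h
    · omega
    · by_cases hu0 : f (some (.inr ⟨i, hi⟩)) = 0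
      · push Not at h
        obtain ⟨y, hy, h2, hne⟩ := h hu0
        have := hu y hy h2 hne
        omega
      · omega
  · have hroot : root t q i = some (.inl i) := dif_neg hi
    simp only [branchWeight, hi, dif_neg, not_false_eq_true, if_false]
    split_ifs with h <;> rw [mem_centerDependent, hroot] at h
    · omega
    · by_contra! h0
      exact h ⟨by omega, fun y hy _ => (adj_inl_iff_of_le (not_lt.1 hi)).1 hy⟩

lemma card_centerDependent_le (f : Option (Fin t ⊕ Fin q) → ℕ) :
    #(centerDependent f) ≤ ((spiderGraph t q).neighborSet none ∩ {u | f u = 0}).ncard := by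
  rw [← card_image_of_injective _ root_injective, ← Set.ncard_coe_finset]
  refine Set.ncard_le_ncard ?_ (Set.toFinite _)
  intro v hv
  simp only [coe_image, Set.mem_image, mem_coe, mem_centerDependent] at hv
  obtain ⟨i, ⟨hi, -⟩, rfl⟩ := hv
  exact ⟨adj_none_root i, hi⟩

lemma le_apply_none_of_centerDependent_nonempty (hf : (spiderGraph t q).IsStRDF f)
    (hne : (centerDependent f).Nonempty) :
    1 + (#(centerDependent f) + 1) / 2 ≤ f none := by
  obtain ⟨i, hi⟩ := hne
  rw [mem_centerDependent] at hi
  have := hf.le_of_unique_witness hi.1 hi.2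
  have := Nat.div_le_div_right (c := 2) (Nat.add_le_add_right (card_centerDependent_le f) 1)
  omega

lemma le_sum_of_isStRDF (ht : 2 ≤ t) (hq : q ≤ t) (hf : (spiderGraph t q).IsStRDF f) :
    1 + q + (t + 1) / 2 ≤ ∑ v, f v := by
  have hsize := sum_le_sum fun i (_ : i ∈ univ) => branch_size_le hf i
  rw [sum_add_distrib, sum_add_distrib, sum_boole, sum_boole, Fin.card_filter_val_lt,
    min_eq_right hq, filter_mem_eq_inter, univ_inter] at hsize
  simp only [sum_const, card_univ, Fintype.card_fin, smul_eq_mul, mul_one, Nat.cast_id] at hsize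
  have hR : #(centerDependent f) ≤ t := (card_le_univ _).trans_eq (Fintype.card_fin t)
  rw [sum_eq_add_sum_branchWeight hq]
  rcases (centerDependent f).eq_empty_or_nonempty with h | h
  · rw [h, card_empty] at hsize
    omega
  · have := le_apply_none_of_centerDependent_nonempty hf h
    omega

end spiderGraph

/-- If `T` is the spider obtained from `K_{1,t}` (`t ≥ 2`) by subdividing `q` of its
edges (`0 ≤ q ≤ t`), then `γ_{StR}(T) = 1 + q + ⌈t/2⌉`. -/
theorem stmt14 (t q : ℕ) (ht : 2 ≤ t) (hq : q ≤ t) :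
    (spiderGraph t q).gammaStR = 1 + q + (t + 1) / 2 := by
  have hmem : 1 + q + (t + 1) / 2 ∈ {k | ∃ f, (spiderGraph t q).IsStRDF f ∧ ∑ v, f v = k} :=
    ⟨_, spiderGraph.isStRDF_centerStRDF (by omega) hq, spiderGraph.sum_centerStRDF hq⟩
  refine le_antisymm (Nat.sInf_le hmem) (le_csInf ⟨_, hmem⟩ ?_)
  rintro k ⟨f, hf, rfl⟩
  exact spiderGraph.le_sum_of_isStRDF ht hq hf
end

section
/- The strong Roman domination number of the path P_n and of the cycle C_n (n ≥ 3) both equal ⌈2n/3⌉. -/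
section Aux

open SimpleGraph

lemma StRaux.range_sum (n : ℕ) :
    (∑ i ∈ Finset.range n, (if i % 3 = 1 then 2 else 0)) = 2 * ((n + 1) / 3) := by
  induction n with
  | zero => simp
  | succ n ih => rw [Finset.sum_range_succ, ih]; split <;> omega

lemma StRaux.sum_f (n : ℕ) (hn : 3 ≤ n) :
    (∑ i : Fin n, (if (i : ℕ) % 3 = 1 then 2 else
      if n % 3 = 1 ∧ (i : ℕ) = n - 1 then 1 else 0)) = (2 * n + 2) / 3 := by
  rw [Fin.sum_univ_eq_sum_range (fun i =>
    if i % 3 = 1 then 2 else if n % 3 = 1 ∧ i = n - 1 then 1 else 0)]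
  have key : ∀ i, (if i % 3 = 1 then 2 else if n % 3 = 1 ∧ i = n - 1 then 1 else 0)
      = (if i % 3 = 1 then 2 else 0) + (if n % 3 = 1 ∧ i = n - 1 then 1 else 0) := by
    intro i
    by_cases h1 : i % 3 = 1
    · have h2 : ¬(n % 3 = 1 ∧ i = n - 1) := by rintro ⟨ha, hb⟩; omega
      simp [h1, h2]
    · simp [h1]
  simp_rw [key]
  rw [Finset.sum_add_distrib, StRaux.range_sum]
  by_cases hc : n % 3 = 1
  · have h1 : (∑ i ∈ Finset.range n, (if n % 3 = 1 ∧ i = n - 1 then 1 else 0))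
        = ∑ i ∈ Finset.range n, (if i = n - 1 then 1 else 0) := by simp [hc]
    rw [h1, Finset.sum_ite_eq' (Finset.range n) (n - 1) (fun _ => 1)]
    have : n - 1 ∈ Finset.range n := by simp; omega
    rw [if_pos this]
    omega
  · have h1 : ∀ i ∈ Finset.range n, (if n % 3 = 1 ∧ i = n - 1 then 1 else 0) = 0 := by
      intro i _; simp [hc]
    rw [Finset.sum_congr rfl h1]
    simp
    omega

lemma StRaux.path_deg {n : ℕ} (v : Fin n) : (SimpleGraph.pathGraph n).deg v ≤ 2 := by
  classical
  have hsub : (SimpleGraph.pathGraph n).neighborSet v ⊆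
      {w : Fin n | (w : ℕ) = (v : ℕ) + 1} ∪ {w : Fin n | (w : ℕ) + 1 = (v : ℕ)} := by
    intro w hw
    rw [SimpleGraph.mem_neighborSet, SimpleGraph.pathGraph_adj] at hw
    rcases hw with h | h
    · exact Or.inl h.symm
    · exact Or.inr h
  calc (SimpleGraph.pathGraph n).deg v
      ≤ ({w : Fin n | (w : ℕ) = (v : ℕ) + 1} ∪ {w : Fin n | (w : ℕ) + 1 = (v : ℕ)}).ncard :=
        Set.ncard_le_ncard hsub (Set.toFinite _)
    _ ≤ ({w : Fin n | (w : ℕ) = (v : ℕ) + 1}).ncard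
        + ({w : Fin n | (w : ℕ) + 1 = (v : ℕ)}).ncard := Set.ncard_union_le _ _
    _ ≤ 1 + 1 := by
        gcongr
        · exact (Set.ncard_le_one (Set.toFinite _)).mpr
            (fun a ha b hb => Fin.ext (by simp at ha hb; omega))
        · exact (Set.ncard_le_one (Set.toFinite _)).mpr
            (fun a ha b hb => Fin.ext (by simp at ha hb; omega))
    _ = 2 := rfl

lemma StRaux.cycle_deg {n : ℕ} (hn : 3 ≤ n) (v : Fin n) :
    (SimpleGraph.cycleGraph n).deg v ≤ 2 := by
  obtain ⟨m, rfl⟩ : ∃ m, n = m + 2 := ⟨n - 2, by omega⟩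
  rw [SimpleGraph.deg, SimpleGraph.cycleGraph_neighborSet]
  calc ({v - 1, v + 1} : Set (Fin (m + 2))).ncard ≤ ({v + 1} : Set (Fin (m + 2))).ncard + 1 :=
        Set.ncard_insert_le _ _
    _ ≤ 2 := by rw [Set.ncard_singleton]

lemma StRaux.path_le_cycle {n : ℕ} (hn : 3 ≤ n) :
    SimpleGraph.pathGraph n ≤ SimpleGraph.cycleGraph n := by
  intro u v h
  rw [SimpleGraph.pathGraph_adj] at h
  rw [SimpleGraph.cycleGraph_adj']
  have hu := u.isLt
  have hv := v.isLt
  rcases h with h | h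
  · right
    have hval : (v - u).val = (n - u.val + v.val) % n := by rw [Fin.sub_def]
    have he : n - u.val + v.val = n + 1 := by omega
    rw [hval, he, Nat.add_mod_left]
    exact Nat.mod_eq_of_lt (by omega)
  · left
    have hval : (u - v).val = (n - v.val + u.val) % n := by rw [Fin.sub_def]
    have he : n - v.val + u.val = n + 1 := by omega
    rw [hval, he, Nat.add_mod_left]
    exact Nat.mod_eq_of_lt (by omega)

lemma StRaux.main {n : ℕ} (hn : 3 ≤ n) (G : SimpleGraph (Fin n))
    (hdeg : ∀ v, G.deg v ≤ 2) (hsub : SimpleGraph.pathGraph n ≤ G) :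
    G.gammaStR = (2 * n + 2) / 3 := by
  classical
  have hmax2 : G.maxDeg ≤ 2 := Finset.sup_le fun v _ => hdeg v
  have hadj01 : G.Adj ⟨0, by omega⟩ ⟨1, by omega⟩ :=
    hsub (SimpleGraph.pathGraph_adj.mpr (Or.inl rfl))
  have hmax1 : 1 ≤ G.maxDeg := by
    have h1 : 1 ≤ G.deg ⟨0, by omega⟩ := by
      have hmem : (⟨1, by omega⟩ : Fin n) ∈ G.neighborSet ⟨0, by omega⟩ := hadj01
      exact (Set.ncard_pos (Set.toFinite _)).mpr ⟨_, hmem⟩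
    exact le_trans h1 (Finset.le_sup (Finset.mem_univ _))
  set f : Fin n → ℕ := fun i => if (i : ℕ) % 3 = 1 then 2 else
      if n % 3 = 1 ∧ (i : ℕ) = n - 1 then 1 else 0 with hfdef
  have hf2 : ∀ v, f v ≤ 2 := by
    intro v
    simp only [hfdef]
    split
    · omega
    · split <;> omega
  have hfStR : G.IsStRDF f := by
    constructor
    · intro v
      have := hf2 v
      omega
    · intro v hv
      have h1 : (v : ℕ) % 3 ≠ 1 := by
        intro h; simp only [hfdef, if_pos h] at hv; omega
      have h2 : n % 3 = 1 → (v : ℕ) ≠ n - 1 := by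
        intro ha hb
        simp only [hfdef, if_neg h1, if_pos (And.intro ha hb)] at hv
        omega
      have hncard : ∀ w : Fin n,
          1 + ((G.neighborSet w ∩ {u | f u = 0}).ncard + 1) / 2 ≤ 2 := by
        intro w
        have hk : (G.neighborSet w ∩ {u | f u = 0}).ncard ≤ 2 :=
          le_trans (Set.ncard_le_ncard Set.inter_subset_left (Set.toFinite _)) (hdeg w)
        omega
      have hvlt := v.isLt
      by_cases h0 : (v : ℕ) % 3 = 0
      · have hv1 : (v : ℕ) + 1 < n := by
          rcases Nat.lt_or_ge ((v : ℕ) + 1) n with h | h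
          · exact h
          · exfalso; exact h2 (by omega) (by omega)
        have hmod : ((v : ℕ) + 1) % 3 = 1 := by omega
        have hfw : f ⟨(v : ℕ) + 1, hv1⟩ = 2 := by simp only [hfdef]; rw [if_pos hmod]
        exact ⟨⟨(v : ℕ) + 1, hv1⟩, hsub (SimpleGraph.pathGraph_adj.mpr (Or.inl rfl)),
          by rw [hfw], by rw [hfw]; exact hncard _⟩
      · have h2' : (v : ℕ) % 3 = 2 := by omega
        have hv2 : (v : ℕ) - 1 < n := by omega
        have hmod : ((v : ℕ) - 1) % 3 = 1 := by omega
        have hfw : f ⟨(v : ℕ) - 1, hv2⟩ = 2 := by simp only [hfdef]; rw [if_pos hmod]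
        exact ⟨⟨(v : ℕ) - 1, hv2⟩, hsub (SimpleGraph.pathGraph_adj.mpr (Or.inr (by simp; omega))),
          by rw [hfw], by rw [hfw]; exact hncard _⟩
  have hsum : (∑ v, f v) = (2 * n + 2) / 3 := StRaux.sum_f n hn
  apply le_antisymm
  · exact Nat.sInf_le ⟨f, hfStR, hsum⟩
  · refine le_csInf ⟨_, f, hfStR, hsum⟩ ?_
    rintro k ⟨g, hg, rfl⟩
    have hg2 : ∀ v, g v ≤ 2 := by
      intro v
      have := hg.1 v
      omega
    set s0 : Finset (Fin n) := Finset.univ.filter (fun v => g v = 0) with hs0def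
    set s1 : Finset (Fin n) := Finset.univ.filter (fun v => ¬ g v = 0) with hs1def
    set s2 : Finset (Fin n) := Finset.univ.filter (fun v => g v = 2) with hs2def
    have hcard : s0.card + s1.card = n := by
      rw [hs0def, hs1def, Finset.card_filter_add_card_filter_not]
      simp
    have hsub21 : s2.card ≤ s1.card := by
      apply Finset.card_le_card
      intro v hv
      simp only [hs1def, hs2def, Finset.mem_filter, Finset.mem_univ, true_and] at *
      omega
    have hch : ∀ v ∈ s0, ∃ w, w ∈ s2 ∧ G.Adj v w := by
      intro v hv
      simp only [hs0def, Finset.mem_filter, Finset.mem_univ, true_and] at hv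
      obtain ⟨w, hadj, hw2, _⟩ := hg.2 v hv
      have := hg2 w
      exact ⟨w, by simp [hs2def]; omega, hadj⟩
    choose! F hF1 hF2 using hch
    have hs0le : s0.card ≤ 2 * s2.card := by
      apply Finset.card_le_mul_card_image_of_maps_to hF1 2
      intro b _
      calc (s0.filter (fun a => F a = b)).card
          = ((s0.filter (fun a => F a = b) : Finset (Fin n)) : Set (Fin n)).ncard := by
            rw [Set.ncard_coe_finset]
        _ ≤ (G.neighborSet b).ncard := by
            apply Set.ncard_le_ncard _ (Set.toFinite _)
            intro x hx
            simp only [Finset.coe_filter, Set.mem_setOf_eq] at hx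
            obtain ⟨hx0, hxb⟩ := hx
            have := hF2 x hx0
            rw [hxb] at this
            exact this.symm
        _ ≤ 2 := hdeg b
    have hsum1 : s1.card + s2.card ≤ ∑ v, g v := by
      have hrw : s1.card + s2.card
          = ∑ v, ((if ¬ g v = 0 then 1 else 0) + (if g v = 2 then 1 else 0)) := by
        rw [Finset.sum_add_distrib, hs1def, hs2def, Finset.card_filter, Finset.card_filter]
      rw [hrw]
      apply Finset.sum_le_sum
      intro v _
      have := hg2 v
      split <;> split <;> omega
    omega

end Aux

/-- For `n ≥ 3`, the strong Roman domination numbers of the path `P_n` and the cycle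
`C_n` both equal `⌈2n/3⌉`. -/
theorem stmt15 (n : ℕ) (hn : 3 ≤ n) :
    (SimpleGraph.pathGraph n).gammaStR = (2 * n + 2) / 3 ∧
    (SimpleGraph.cycleGraph n).gammaStR = (2 * n + 2) / 3 := by
  constructor
  · exact StRaux.main hn _ (fun v => StRaux.path_deg v) le_rfl
  · exact StRaux.main hn _ (fun v => StRaux.cycle_deg hn v) (StRaux.path_le_cycle hn)
end

section
/- Let G be a graph and H an induced subgraph of G isomorphic to S(K_{1,3}) (the subdivision of K_{1,3}) such that no vertex of H other than its center has a neighbor in G outside H. Then every strong Roman dominating function of G has total weight at least 6 on the vertices of H. -/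
/-!
Each arm `v - u - c` of the spider (leaf `v`, subdivision vertex `u`, center `c`) carries
weight at least 2, unless `f v = 1`, `f u = 0` and `u` is defended by the center. An arm of
the second kind is cheap, but it forces `f c ≥ 1 + ⌈m/2⌉`, where `m ≥ #cheap arms` counts the
`0`-neighbours of `c`; with `k` cheap arms the total is at least `2(3 - k) + k + 1 + ⌈k/2⌉ ≥ 6`.
-/

namespace SimpleGraph

variable {V : Type*} {G : SimpleGraph V}

theorem IsStRDF.two_le_of_forall_adj_eq [Fintype V] {f : V → ℕ} (hf : G.IsStRDF f) {v u : V}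
    (hv : ∀ w, G.Adj v w → w = u) (h0 : f v = 0) : 2 ≤ f u := by
  obtain ⟨w, hvw, hw, -⟩ := hf.2 v h0
  rwa [hv w hvw] at hw

theorem IsStRDF.pendant_path [Fintype V] {f : V → ℕ} (hf : G.IsStRDF f) {v u c : V}
    (hv : ∀ w, G.Adj v w → w = u) (hu : ∀ w, G.Adj u w → w = c ∨ w = v) :
    2 ≤ f v + f u ∨
      (f v = 1 ∧ f u = 0 ∧ 2 ≤ f c ∧
        1 + ((G.neighborSet c ∩ {x | f x = 0}).ncard + 1) / 2 ≤ f c) := by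
  by_cases hv0 : f v = 0
  · exact Or.inl (by have := hf.two_le_of_forall_adj_eq hv hv0; omega)
  by_cases hu0 : f u = 0
  · obtain ⟨w, huw, hw, hwm⟩ := hf.2 u hu0
    rcases hu w huw with rfl | rfl
    · by_cases hv2 : 2 ≤ f v
      · exact Or.inl (by omega)
      · exact Or.inr ⟨by omega, hu0, hw, hwm⟩
    · exact Or.inl (by omega)
  · exact Or.inl (by omega)

theorem exists_adj_eq_of_forall_not_adj {W : Type*} {H : SimpleGraph W} {φ : W → V}
    (hind : ∀ a b, G.Adj (φ a) (φ b) ↔ H.Adj a b) {a : W}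
    (hout : ∀ w, w ∉ Set.range φ → ¬ G.Adj (φ a) w) {w : V} (h : G.Adj (φ a) w) :
    ∃ b, H.Adj a b ∧ φ b = w := by
  by_cases hw : w ∈ Set.range φ
  · obtain ⟨b, rfl⟩ := hw
    exact ⟨b, (hind a b).1 h, rfl⟩
  · exact absurd h (hout w hw)

end SimpleGraph

section spiderGraph

variable {t : ℕ}

theorem spiderGraph_eq_inr_of_adj_inl {i : Fin t} {b : Option (Fin t ⊕ Fin t)}
    (h : (spiderGraph t t).Adj (some (.inl i)) b) : b = some (.inr i) := by
  have : (t ≤ (i : ℕ) ∧ b = none) ∨ ∃ j : Fin t, (i : ℕ) = j ∧ b = some (.inr j) := by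
    simpa [spiderGraph] using h
  rcases this with ⟨hi, -⟩ | ⟨j, hij, rfl⟩
  · exact absurd i.isLt (by omega)
  · rw [Fin.ext hij]

theorem spiderGraph_adj_inr {j : Fin t} {b : Option (Fin t ⊕ Fin t)}
    (h : (spiderGraph t t).Adj (some (.inr j)) b) : b = none ∨ b = some (.inl j) := by
  have : b = none ∨ ∃ i : Fin t, (i : ℕ) = j ∧ b = some (.inl i) := by
    simpa [spiderGraph] using h
  rcases this with rfl | ⟨i, hij, rfl⟩
  · exact Or.inl rfl
  · exact Or.inr (by rw [Fin.ext hij])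

theorem spiderGraph_adj_none_inr {q : ℕ} (j : Fin q) :
    (spiderGraph t q).Adj none (some (.inr j)) :=
  Or.inr (Or.inl ⟨j, Or.inl ⟨rfl, rfl⟩⟩)

end spiderGraph

/-- If `H` is an induced subgraph of `G` isomorphic to `S(K_{1,3})` such that no vertex
of `H` other than its center has a neighbor in `G` outside `H`, then every strong Roman
dominating function of `G` has total weight at least 6 on the vertices of `H`. -/
theorem stmt18 {V : Type*} [Fintype V] (G : SimpleGraph V)
    (φ : Option (Fin 3 ⊕ Fin 3) → V) (hinj : Function.Injective φ)
    (hind : ∀ a b, G.Adj (φ a) (φ b) ↔ (spiderGraph 3 3).Adj a b)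
    (hout : ∀ a, a ≠ none → ∀ w, w ∉ Set.range φ → ¬ G.Adj (φ a) w)
    (f : V → ℕ) (hf : G.IsStRDF f) :
    6 ≤ ∑ a, f (φ a) := by
  have arm (i : Fin 3) := hf.pendant_path (v := φ (some (.inl i))) (u := φ (some (.inr i)))
    (c := φ none)
    (fun w hw => by
      obtain ⟨b, hb, rfl⟩ := G.exists_adj_eq_of_forall_not_adj hind (hout _ (by simp)) hw
      rw [spiderGraph_eq_inr_of_adj_inl hb])
    (fun w hw => by
      obtain ⟨b, hb, rfl⟩ := G.exists_adj_eq_of_forall_not_adj hind (hout _ (by simp)) hw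
      rcases spiderGraph_adj_inr hb with rfl | rfl <;> simp)
  rw [Fintype.sum_option, Fintype.sum_sum_type, Fin.sum_univ_three, Fin.sum_univ_three]
  rcases arm 0 with h0 | ⟨hv0, hu0, h0⟩ <;> rcases arm 1 with h1 | ⟨hv1, hu1, h1⟩ <;>
    rcases arm 2 with h2 | ⟨hv2, hu2, h2⟩ <;> try omega
  -- Only three cheap arms survive `omega`: then the center has three `0`-neighbours.
  have hzero : ∀ j, f (φ (some (.inr j))) = 0 := by
    intro j; fin_cases j <;> assumption
  have hm : 3 ≤ (G.neighborSet (φ none) ∩ {x | f x = 0}).ncard := calc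
    3 = (Set.range (φ ∘ some ∘ Sum.inr)).ncard := by
      rw [Set.ncard_range_of_injective (hinj.comp ((Option.some_injective _).comp
        Sum.inr_injective))]
      simp
    _ ≤ _ := Set.ncard_le_ncard <| Set.range_subset_iff.2 fun j =>
      Set.mem_inter ((hind _ _).2 (spiderGraph_adj_none_inr j)) (hzero j)
  omega
end
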